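/- Let d ≥ 2 and let V: ℝ^d → ℝ be continuous with ∫ e^{V(x)} dx = 1; let μ(dx) = e^{V(x)} dx. For θ in the unit sphere S^{d-1} set h(θ) := ∫₀^∞ s^{d-1} e^{V(sθ)} ds and φ_θ(r) := (1/h(θ)) ∫₀^r s^{d-1} e^{V(sθ)} ds, let Φ₀(r) := (2π)^{-d/2} ∫_{{|x| < r}} e^{-|x|²/2} dx, and define y(x) := Φ₀^{-1}(φ_{x/|x|}(|x|)) · x/|x| for x ≠ 0. Assume h(θ) < ∞ for every θ. Then the pushforward measure μ∘y^{-1} has density x ↦ c(d) · h(x/|x|) with respect to the standard Gaussian measure γ(dx) = (2π)^{-d/2} e^{-|x|²/2} dx on ℝ^d, where c(d) := d · ω_d and ω_d is the volume of the unit ball in ℝ^d; that is, ∫ g(y(x)) μ(dx) = ∫ g(x) c(d) h(x/|x|) γ(dx) for every bounded measurable g on ℝ^d. -/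

import Mathlib

open MeasureTheory Real Set

/-- The angular density `h(θ) = ∫₀^∞ s^{d-1} e^{V(sθ)} ds`. -/
noncomputable def hAng (d : ℕ) (V : EuclideanSpace ℝ (Fin d) → ℝ)
    (θ : EuclideanSpace ℝ (Fin d)) : ℝ :=
  ∫ s in Ioi (0:ℝ), s ^ (d - 1) * Real.exp (V (s • θ))

/-- The radial distribution function `φ_θ(r) = (1/h(θ)) ∫₀^r s^{d-1} e^{V(sθ)} ds`. -/
noncomputable def phiAng (d : ℕ) (V : EuclideanSpace ℝ (Fin d) → ℝ)
    (θ : EuclideanSpace ℝ (Fin d)) (r : ℝ) : ℝ :=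
  (hAng d V θ)⁻¹ * ∫ s in (0:ℝ)..r, s ^ (d - 1) * Real.exp (V (s • θ))

/-- The radial distribution function of the standard Gaussian measure on `ℝ^d`. -/
noncomputable def Phi0 (d : ℕ) (r : ℝ) : ℝ :=
  (2 * Real.pi) ^ (-(d:ℝ)/2) *
    ∫ x in Metric.ball (0 : EuclideanSpace ℝ (Fin d)) r, Real.exp (-‖x‖^2/2)

/-- The inverse of the strictly increasing bijection `Φ₀ : [0,∞) → [0,1)`. -/
noncomputable def Phi0Inv (d : ℕ) (u : ℝ) : ℝ := sInf {r : ℝ | 0 ≤ r ∧ u ≤ Phi0 d r}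

/-- The transport map `y(x) = Φ₀^{-1}(φ_{x/|x|}(|x|)) x/|x|`. -/
noncomputable def yMap (d : ℕ) (V : EuclideanSpace ℝ (Fin d) → ℝ)
    (x : EuclideanSpace ℝ (Fin d)) : EuclideanSpace ℝ (Fin d) :=
  Phi0Inv d (phiAng d V (‖x‖⁻¹ • x) ‖x‖) • (‖x‖⁻¹ • x)

/-- The volume `ω_d` of the unit ball in `ℝ^d`. -/
noncomputable def omegad (d : ℕ) : ℝ :=
  (volume (Metric.ball (0 : EuclideanSpace ℝ (Fin d)) 1)).toReal


open Filter

namespace T17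


variable {k : ℕ} {ρ : ℝ → ℝ}

lemma intOn_Ioc (hρ : Continuous ρ) (x y : ℝ) :
    IntegrableOn (fun s : ℝ => s ^ k * ρ s) (Ioc x y) :=
  ((continuous_pow k).mul hρ).integrableOn_Ioc

lemma a_nonneg_on (hpos : ∀ s, 0 < ρ s) {x : ℝ} (hx : 0 ≤ x) {s : ℝ} (hs : s ∈ Ioi x) :
    0 ≤ s ^ k * ρ s :=
  le_of_lt (mul_pos (pow_pos (lt_of_le_of_lt hx hs) _) (hpos s))

lemma F_nonneg (hpos : ∀ s, 0 < ρ s) (r : ℝ) :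
    0 ≤ ∫ s in Ioc 0 r, s ^ k * ρ s :=
  setIntegral_nonneg measurableSet_Ioc fun s hs => a_nonneg_on hpos le_rfl hs.1

lemma int_Ioc_pos (hρ : Continuous ρ) (hpos : ∀ s, 0 < ρ s) {x y : ℝ} (hx : 0 ≤ x) (hxy : x < y) :
    0 < ∫ s in Ioc x y, s ^ k * ρ s := by
  rw [setIntegral_pos_iff_support_of_nonneg_ae ?_ (intOn_Ioc hρ x y)]
  · have : Function.support (fun s : ℝ => s ^ k * ρ s) ∩ Ioc x y = Ioc x y := by
      refine inter_eq_self_of_subset_right fun s hs => ?_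
      exact ne_of_gt (mul_pos (pow_pos (lt_of_le_of_lt hx hs.1) _) (hpos s))
    rw [this, Real.volume_Ioc]
    simp [hxy]
  · filter_upwards [ae_restrict_mem measurableSet_Ioc] with s hs
    exact a_nonneg_on hpos hx hs.1

lemma int_Ioi_pos (hρ : Continuous ρ)
    (hint : IntegrableOn (fun s : ℝ => s ^ k * ρ s) (Ioi 0))
    (hpos : ∀ s, 0 < ρ s) {r : ℝ} (hr : 0 ≤ r) :
    0 < ∫ s in Ioi r, s ^ k * ρ s := by
  rw [setIntegral_pos_iff_support_of_nonneg_ae ?_ (hint.mono_set (Ioi_subset_Ioi hr))]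
  · have : Function.support (fun s : ℝ => s ^ k * ρ s) ∩ Ioi r = Ioi r := by
      refine inter_eq_self_of_subset_right fun s hs => ?_
      exact ne_of_gt (mul_pos (pow_pos (lt_of_le_of_lt hr hs) _) (hpos s))
    rw [this, Real.volume_Ioi]
    simp
  · filter_upwards [ae_restrict_mem measurableSet_Ioi] with s hs
    exact a_nonneg_on hpos hr hs

lemma F_split (hρ : Continuous ρ)
    (hint : IntegrableOn (fun s : ℝ => s ^ k * ρ s) (Ioi 0)) {r : ℝ} (hr : 0 ≤ r) :
    ∫ s in Ioi 0, s ^ k * ρ s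
      = (∫ s in Ioc 0 r, s ^ k * ρ s) + ∫ s in Ioi r, s ^ k * ρ s := by
  rw [← Ioc_union_Ioi_eq_Ioi hr,
    setIntegral_union Ioc_disjoint_Ioi_same measurableSet_Ioi (intOn_Ioc hρ 0 r)
      (hint.mono_set (Ioi_subset_Ioi hr))]

lemma F_lt_total (hρ : Continuous ρ)
    (hint : IntegrableOn (fun s : ℝ => s ^ k * ρ s) (Ioi 0))
    (hpos : ∀ s, 0 < ρ s) {r : ℝ} (hr : 0 ≤ r) :
    (∫ s in Ioc 0 r, s ^ k * ρ s) < ∫ s in Ioi 0, s ^ k * ρ s := by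
  rw [F_split hρ hint hr]
  exact lt_add_of_pos_right _ (int_Ioi_pos hρ hint hpos hr)

lemma m_pos (hρ : Continuous ρ)
    (hint : IntegrableOn (fun s : ℝ => s ^ k * ρ s) (Ioi 0))
    (hpos : ∀ s, 0 < ρ s) :
    0 < ∫ s in Ioi 0, s ^ k * ρ s := by
  have := F_lt_total hρ hint hpos (r := 0) le_rfl
  simpa using this

lemma F_strictMonoOn (hρ : Continuous ρ) (hpos : ∀ s, 0 < ρ s) :
    StrictMonoOn (fun r => ∫ s in Ioc 0 r, s ^ k * ρ s) (Ici 0) := by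
  intro x hx y _ hxy
  have : ∫ s in Ioc 0 y, s ^ k * ρ s
      = (∫ s in Ioc 0 x, s ^ k * ρ s) + ∫ s in Ioc x y, s ^ k * ρ s := by
    rw [← setIntegral_union (Ioc_disjoint_Ioc_of_le le_rfl) measurableSet_Ioc (intOn_Ioc hρ 0 x)
      (intOn_Ioc hρ x y), Ioc_union_Ioc_eq_Ioc hx hxy.le]
  simp only [this]
  exact lt_add_of_pos_right _ (int_Ioc_pos hρ hpos hx hxy)

lemma F_eq_interval {r : ℝ} (hr : 0 ≤ r) :
    ∫ s in Ioc 0 r, s ^ k * ρ s = ∫ s in (0:ℝ)..r, s ^ k * ρ s :=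
  (intervalIntegral.integral_of_le hr).symm

lemma F_continuousOn (hρ : Continuous ρ) :
    ContinuousOn (fun r => ∫ s in Ioc 0 r, s ^ k * ρ s) (Ici 0) := by
  have hc : Continuous fun r => ∫ s in (0:ℝ)..r, s ^ k * ρ s :=
    intervalIntegral.continuous_primitive
      (fun a b => ((continuous_pow k).mul hρ).intervalIntegrable a b) 0
  exact hc.continuousOn.congr fun r hr => F_eq_interval hr

lemma F_tendsto (hint : IntegrableOn (fun s : ℝ => s ^ k * ρ s) (Ioi 0)) :
    Tendsto (fun r => ∫ s in Ioc 0 r, s ^ k * ρ s) atTop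
      (nhds (∫ s in Ioi 0, s ^ k * ρ s)) := by
  have := intervalIntegral_tendsto_integral_Ioi 0 hint tendsto_id
  refine this.congr' ?_
  filter_upwards [eventually_ge_atTop (0:ℝ)] with r hr
  exact (F_eq_interval hr).symm

lemma F_surj (hρ : Continuous ρ)
    (hint : IntegrableOn (fun s : ℝ => s ^ k * ρ s) (Ioi 0))
    {v : ℝ} (h0 : 0 ≤ v) (hv : v < ∫ s in Ioi 0, s ^ k * ρ s) :
    ∃ r, 0 ≤ r ∧ ∫ s in Ioc 0 r, s ^ k * ρ s = v := by
  have key : Ico ((fun r => ∫ s in Ioc 0 r, s ^ k * ρ s) 0)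
      (∫ s in Ioi 0, s ^ k * ρ s) ⊆ (fun r => ∫ s in Ioc 0 r, s ^ k * ρ s) '' Ici 0 :=
    IsPreconnected.intermediate_value_Ico isPreconnected_Ici self_mem_Ici
      (le_principal_iff.mpr (Ici_mem_atTop 0)) (F_continuousOn hρ) (F_tendsto hint)
  have h0' : (fun r => ∫ s in Ioc 0 r, s ^ k * ρ s) 0 = 0 := by simp
  rw [h0'] at key
  obtain ⟨r, hr, hrv⟩ := key ⟨h0, hv⟩
  exact ⟨r, hr, hrv⟩



variable {d : ℕ}

lemma nontriv (hd : 2 ≤ d) : Nontrivial (EuclideanSpace ℝ (Fin d)) := by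
  haveI : Nonempty (Fin d) := ⟨⟨0, by omega⟩⟩
  infer_instance

lemma omegad_pos (hd : 2 ≤ d) : 0 < omegad d := by
  haveI := nontriv hd
  exact ENNReal.toReal_pos (Metric.measure_ball_pos volume 0 one_pos).ne'
    measure_ball_lt_top.ne

lemma dim_eq : Module.finrank ℝ (EuclideanSpace ℝ (Fin d)) = d :=
  finrank_euclideanSpace_fin

lemma radial_integral_eq (hd : 2 ≤ d) (f : ℝ → ℝ) :
    ∫ x : EuclideanSpace ℝ (Fin d), f ‖x‖
      = (d : ℝ) * omegad d * ∫ y in Ioi (0:ℝ), y ^ (d - 1) * f y := by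
  haveI := nontriv hd
  rw [integral_fun_norm_addHaar (volume : Measure (EuclideanSpace ℝ (Fin d))) f]
  simp only [dim_eq, nsmul_eq_mul, smul_eq_mul, omegad]
  rw [← measureReal_def]
  ring

lemma Phi0_eq (hd : 2 ≤ d) (r : ℝ) :
    Phi0 d r = (2 * Real.pi) ^ (-(d:ℝ)/2) *
      ((d : ℝ) * omegad d * ∫ s in Ioc (0:ℝ) r, s ^ (d - 1) * Real.exp (-s^2/2)) := by
  unfold Phi0
  congr 1
  have h1 : ∫ x in Metric.ball (0 : EuclideanSpace ℝ (Fin d)) r, Real.exp (-‖x‖^2/2)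
      = ∫ x : EuclideanSpace ℝ (Fin d),
          (fun s : ℝ => if s < r then Real.exp (-s^2/2) else 0) ‖x‖ := by
    rw [← integral_indicator measurableSet_ball]
    congr 1
    ext x
    by_cases hx : ‖x‖ < r <;> simp [Set.indicator, mem_ball_zero_iff, hx]
  rw [h1, radial_integral_eq hd (fun s : ℝ => if s < r then Real.exp (-s^2/2) else 0)]
  congr 1
  have h2 : ∀ y : ℝ, y ^ (d-1) * (if y < r then Real.exp (-y^2/2) else 0)
      = (Iio r).indicator (fun s => s ^ (d-1) * Real.exp (-s^2/2)) y := by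
    intro y
    by_cases hy : y < r <;> simp [Set.indicator, hy]
  simp only [h2]
  rw [integral_indicator measurableSet_Iio, Measure.restrict_restrict measurableSet_Iio]
  rw [show Iio r ∩ Ioi (0:ℝ) = Ioo 0 r by rw [inter_comm, Ioi_inter_Iio]]
  rw [Measure.restrict_congr_set Ioo_ae_eq_Ioc]

lemma gauss_int_Ioi (hd : 2 ≤ d) :
    IntegrableOn (fun s : ℝ => s ^ (d-1) * Real.exp (-s^2/2)) (Ioi 0) := by
  have h1 : (1:ℝ) ≤ d := by exact_mod_cast (by omega : 1 ≤ d)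
  have h := integrableOn_rpow_mul_exp_neg_mul_sq (b := 1/2)
    (by norm_num) (s := ((d:ℝ) - 1)) (by linarith)
  refine h.congr_fun (fun x hx => ?_) measurableSet_Ioi
  have hx' : (0:ℝ) < x := hx
  rw [show ((d:ℝ) - 1) = ((d - 1 : ℕ) : ℝ) by
      rw [Nat.cast_sub (by omega : 1 ≤ d)]; norm_num]
  simp only [Real.rpow_natCast]
  ring_nf

lemma gauss_total (hd : 2 ≤ d) :
    (2 * Real.pi) ^ (-(d:ℝ)/2) *
      ((d : ℝ) * omegad d * ∫ s in Ioi (0:ℝ), s ^ (d - 1) * Real.exp (-s^2/2)) = 1 := by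
  have h1 : ∫ x : EuclideanSpace ℝ (Fin d), Real.exp (-‖x‖^2/2)
      = (d : ℝ) * omegad d * ∫ y in Ioi (0:ℝ), y ^ (d - 1) * Real.exp (-y^2/2) :=
    radial_integral_eq hd (fun s => Real.exp (-s^2/2))
  have h2 : ∫ x : EuclideanSpace ℝ (Fin d), Real.exp (-‖x‖^2/2)
      = (2 * Real.pi) ^ ((d:ℝ)/2) := by
    have h3 := GaussianFourier.integral_rexp_neg_mul_sq_norm (V := EuclideanSpace ℝ (Fin d))
      (b := 1/2) (by norm_num)
    rw [dim_eq] at h3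
    calc ∫ x : EuclideanSpace ℝ (Fin d), Real.exp (-‖x‖^2/2)
        = ∫ x : EuclideanSpace ℝ (Fin d), Real.exp (-(1/2) * ‖x‖^2) := by
          congr 1; ext x; congr 1; ring
      _ = (Real.pi / (1/2)) ^ ((d:ℝ)/2) := h3
      _ = (2 * Real.pi) ^ ((d:ℝ)/2) := by
          congr 1; field_simp
  rw [← h1, h2, ← Real.rpow_add (by positivity),
    show -(d:ℝ)/2 + (d:ℝ)/2 = 0 by ring, Real.rpow_zero]

noncomputable def c2 (d : ℕ) : ℝ := (2 * Real.pi) ^ (-(d:ℝ)/2) * ((d:ℝ) * omegad d)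

lemma c2_pos (hd : 2 ≤ d) : 0 < c2 d := by
  have h1 := omegad_pos hd
  have hd0 : (0:ℝ) < d := by exact_mod_cast (by omega : 0 < d)
  unfold c2
  positivity

lemma Phi0_eq' (hd : 2 ≤ d) (r : ℝ) :
    Phi0 d r = c2 d * ∫ s in Ioc (0:ℝ) r, s ^ (d-1) * Real.exp (-s^2/2) := by
  rw [Phi0_eq hd r, c2]; ring

lemma gauss_total' (hd : 2 ≤ d) :
    c2 d * ∫ s in Ioi (0:ℝ), s ^ (d-1) * Real.exp (-s^2/2) = 1 := by
  rw [c2, mul_assoc]; exact gauss_total hd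

lemma gcont : Continuous (fun s : ℝ => Real.exp (-s^2/2)) := by continuity

lemma gpos : ∀ s : ℝ, 0 < Real.exp (-s^2/2) := fun s => Real.exp_pos _

lemma Phi0_zero (hd : 2 ≤ d) : Phi0 d 0 = 0 := by simp [Phi0_eq' hd 0]

lemma Phi0_nonneg (hd : 2 ≤ d) (r : ℝ) : 0 ≤ Phi0 d r := by
  rw [Phi0_eq' hd r]
  exact mul_nonneg (c2_pos hd).le (F_nonneg gpos r)

lemma Phi0_lt_one (hd : 2 ≤ d) (r : ℝ) : Phi0 d r < 1 := by
  rcases le_or_gt 0 r with h | h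
  · rw [Phi0_eq' hd r, ← gauss_total' hd]
    exact (mul_lt_mul_iff_right₀ (c2_pos hd)).2 (F_lt_total gcont (gauss_int_Ioi hd) gpos h)
  · rw [Phi0_eq' hd r, Ioc_eq_empty (by intro hc; exact absurd (hc.trans h) (lt_irrefl 0))]
    simp

lemma Phi0_strictMonoOn (hd : 2 ≤ d) : StrictMonoOn (Phi0 d) (Ici 0) := by
  intro x hx y hy hxy
  rw [Phi0_eq' hd x, Phi0_eq' hd y]
  exact (mul_lt_mul_iff_right₀ (c2_pos hd)).2 (F_strictMonoOn gcont gpos hx hy hxy)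

lemma Phi0_monotoneOn (hd : 2 ≤ d) : MonotoneOn (Phi0 d) (Ici 0) :=
  (Phi0_strictMonoOn hd).monotoneOn

lemma Phi0_continuousOn (hd : 2 ≤ d) : ContinuousOn (Phi0 d) (Ici 0) := by
  have := (F_continuousOn (k := d - 1) gcont).const_smul (c2 d)
  refine this.congr fun r hr => ?_
  rw [Phi0_eq' hd r]
  simp

lemma Phi0_tendsto (hd : 2 ≤ d) : Tendsto (Phi0 d) atTop (nhds 1) := by
  have h1 := (F_tendsto (k := d - 1) (ρ := fun s => Real.exp (-s^2/2))
    (gauss_int_Ioi hd)).const_mul (c2 d)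
  rw [gauss_total' hd] at h1
  refine h1.congr fun r => (Phi0_eq' hd r).symm

lemma Phi0_surj (hd : 2 ≤ d) {u : ℝ} (h0 : 0 ≤ u) (h1 : u < 1) :
    ∃ r, 0 ≤ r ∧ Phi0 d r = u := by
  have hc := c2_pos hd
  obtain ⟨r, hr, hrv⟩ := F_surj gcont (gauss_int_Ioi hd) (v := u / c2 d)
    (div_nonneg h0 hc.le) (by
      rw [div_lt_iff₀ hc, mul_comm, gauss_total' hd] at *
      · nlinarith [gauss_total' hd, m_pos gcont (gauss_int_Ioi hd) gpos] )
  refine ⟨r, hr, ?_⟩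
  rw [Phi0_eq' hd r, hrv, mul_div_cancel₀ _ hc.ne']

lemma Phi0Inv_spec (hd : 2 ≤ d) {u : ℝ} (h0 : 0 ≤ u) (h1 : u < 1) :
    0 ≤ Phi0Inv d u ∧ Phi0 d (Phi0Inv d u) = u := by
  obtain ⟨r, hr, hru⟩ := Phi0_surj hd h0 h1
  have hset : {x : ℝ | 0 ≤ x ∧ u ≤ Phi0 d x} = Ici r := by
    ext x
    simp only [mem_setOf_eq, mem_Ici]
    constructor
    · rintro ⟨hx0, hxu⟩
      by_contra hc
      push_neg at hc
      have := Phi0_strictMonoOn hd hx0 hr hc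
      rw [hru] at this
      exact absurd (hxu.trans_lt this) (lt_irrefl u)
    · intro hx
      exact ⟨hr.trans hx, hru ▸ Phi0_monotoneOn hd hr (hr.trans hx) hx⟩
  rw [Phi0Inv, hset, csInf_Ici]
  exact ⟨hr, hru⟩

lemma Phi0Inv_le_iff (hd : 2 ≤ d) {u t : ℝ} (h0 : 0 ≤ u) (h1 : u < 1) (ht : 0 ≤ t) :
    Phi0Inv d u ≤ t ↔ u ≤ Phi0 d t := by
  obtain ⟨hr0, hru⟩ := Phi0Inv_spec hd h0 h1
  constructor
  · intro h
    rw [← hru]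
    exact Phi0_monotoneOn hd hr0 ht h
  · intro h
    by_contra hc
    push_neg at hc
    have := Phi0_strictMonoOn hd ht hr0 hc
    rw [hru] at this
    exact absurd (h.trans_lt this) (lt_irrefl u)

lemma Phi0Inv_nonneg (u : ℝ) : 0 ≤ Phi0Inv d u :=
  Real.sInf_nonneg fun x hx => hx.1

lemma Phi0Inv_of_one_le (hd : 2 ≤ d) {u : ℝ} (hu : 1 ≤ u) : Phi0Inv d u = 0 := by
  have : {r : ℝ | 0 ≤ r ∧ u ≤ Phi0 d r} = ∅ := by
    ext x
    simp only [mem_setOf_eq, mem_empty_iff_false, iff_false, not_and, not_le]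
    exact fun hx => lt_of_lt_of_le (Phi0_lt_one hd x) hu
  rw [Phi0Inv, this, Real.sInf_empty]

lemma Phi0Inv_of_nonpos (hd : 2 ≤ d) {u : ℝ} (hu : u ≤ 0) : Phi0Inv d u = 0 := by
  refine le_antisymm ?_ (Phi0Inv_nonneg u)
  refine csInf_le ⟨0, fun x hx => hx.1⟩ ?_
  exact ⟨le_rfl, by rw [Phi0_zero hd]; exact hu⟩

lemma measurable_Phi0Inv (hd : 2 ≤ d) : Measurable (Phi0Inv d) := by
  apply measurable_of_Iic
  intro t
  rcases lt_or_ge t 0 with ht | ht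
  · have : Phi0Inv d ⁻¹' Iic t = ∅ := by
      ext u
      simp only [mem_preimage, mem_Iic, mem_empty_iff_false, iff_false, not_le]
      exact lt_of_lt_of_le ht (Phi0Inv_nonneg u)
    rw [this]; exact MeasurableSet.empty
  · have : Phi0Inv d ⁻¹' Iic t = Iic (Phi0 d t) ∪ Ici 1 := by
      ext u
      simp only [mem_preimage, mem_Iic, mem_union, mem_Ici]
      rcases le_or_gt 1 u with hu | hu
      · simp [Phi0Inv_of_one_le hd hu, ht, hu]
      · rcases le_or_gt 0 u with hu0 | hu0
        · rw [Phi0Inv_le_iff hd hu0 hu ht]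
          simp [hu.not_ge]
        · have h1 : Phi0Inv d u = 0 := Phi0Inv_of_nonpos hd hu0.le
          have h2 : u ≤ Phi0 d t := hu0.le.trans (Phi0_nonneg hd t)
          simp [h1, ht, h2]
    rw [this]
    exact measurableSet_Iic.union measurableSet_Ici

lemma Phi0_nonpos (hd : 2 ≤ d) {t : ℝ} (ht : t ≤ 0) : Phi0 d t = 0 := by
  rw [Phi0_eq' hd t, Ioc_eq_empty (by intro hc; exact absurd (hc.trans_le ht) (lt_irrefl 0))]
  simp

lemma measure_withDensity_apply {k : ℕ} {ρ : ℝ → ℝ} (hρ : Continuous ρ) (hpos : ∀ s, 0 < ρ s)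
    (hint : IntegrableOn (fun s : ℝ => s ^ k * ρ s) (Ioi 0))
    {S : Set ℝ} (hS : MeasurableSet S) :
    ((volume.restrict (Ioi 0)).withDensity fun s => ENNReal.ofReal (s ^ k * ρ s)) S
      = ENNReal.ofReal (∫ s in S ∩ Ioi 0, s ^ k * ρ s) := by
  rw [withDensity_apply _ hS, Measure.restrict_restrict hS,
    ← ofReal_integral_eq_lintegral_ofReal (hint.mono_set inter_subset_right) ?_]
  filter_upwards [ae_restrict_mem (hS.inter measurableSet_Ioi)] with s hs
  exact a_nonneg_on hpos le_rfl hs.2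

section Theta

variable (d : ℕ) (V : EuclideanSpace ℝ (Fin d) → ℝ) (θ : EuclideanSpace ℝ (Fin d))

/-- transported radial map -/
noncomputable def Tmap (r : ℝ) : ℝ := Phi0Inv d (phiAng d V θ r)

variable {d V θ}
variable (hd : 2 ≤ d) (hV : Continuous V) (hθ : ‖θ‖ = 1)
  (hint : IntegrableOn (fun s : ℝ => s ^ (d-1) * Real.exp (V (s • θ))) (Ioi 0))

include hV in
lemma rcont : Continuous (fun s : ℝ => Real.exp (V (s • θ))) :=
  Real.continuous_exp.comp (hV.comp (continuous_id.smul continuous_const))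

lemma rpos : ∀ s : ℝ, 0 < Real.exp (V (s • θ)) := fun _ => Real.exp_pos _

lemma hAng_eq : hAng d V θ = ∫ s in Ioi (0:ℝ), s ^ (d-1) * Real.exp (V (s • θ)) := rfl

include hV hint in
lemma hAng_pos : 0 < hAng d V θ := m_pos (rcont (hV := hV)) hint (rpos)

include hV in
lemma phiAng_eq {r : ℝ} (hr : 0 ≤ r) :
    phiAng d V θ r = (hAng d V θ)⁻¹ * ∫ s in Ioc (0:ℝ) r, s ^ (d-1) * Real.exp (V (s • θ)) := by
  rw [phiAng, F_eq_interval hr]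

include hV in
lemma phiAng_continuous : Continuous (phiAng d V θ) := by
  unfold phiAng
  exact continuous_const.mul (intervalIntegral.continuous_primitive
    (fun a b => ((continuous_pow (d-1)).mul (rcont (hV := hV))).intervalIntegrable a b) 0)

include hV hint in
lemma phiAng_nonneg {r : ℝ} (hr : 0 ≤ r) : 0 ≤ phiAng d V θ r := by
  rw [phiAng_eq hV hr]
  exact mul_nonneg (inv_nonneg.2 (hAng_pos hV hint).le) (F_nonneg (rpos) r)

include hV hint in
lemma phiAng_lt_one {r : ℝ} (hr : 0 ≤ r) : phiAng d V θ r < 1 := by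
  have h1 : (hAng d V θ)⁻¹ * (∫ s in Ioc (0:ℝ) r, s ^ (d-1) * Real.exp (V (s • θ)))
      < (hAng d V θ)⁻¹ * hAng d V θ :=
    mul_lt_mul_of_pos_left (F_lt_total (rcont (hV := hV)) hint rpos hr)
      (inv_pos.2 (hAng_pos hV hint))
  rw [inv_mul_cancel₀ (hAng_pos hV hint).ne'] at h1
  rw [phiAng_eq hV hr]
  exact h1

include hV hint in
lemma phiAng_strictMonoOn : StrictMonoOn (phiAng d V θ) (Ici 0) := by
  intro x hx y hy hxy
  rw [phiAng_eq hV hx, phiAng_eq hV hy]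
  exact mul_lt_mul_of_pos_left (F_strictMonoOn (rcont (hV := hV)) rpos hx hy hxy)
    (inv_pos.2 (hAng_pos hV hint))

include hd hV in
lemma measurable_Tmap : Measurable (Tmap d V θ) :=
  (measurable_Phi0Inv hd).comp (phiAng_continuous hV).measurable

variable (d V θ) in
noncomputable def muA : Measure ℝ :=
  (volume.restrict (Ioi 0)).withDensity fun s =>
    ENNReal.ofReal (s ^ (d-1) * Real.exp (V (s • θ)))

variable (d V θ) in
noncomputable def muB : Measure ℝ :=
  (volume.restrict (Ioi 0)).withDensity fun s =>
    ENNReal.ofReal (s ^ (d-1) * (hAng d V θ * (c2 d * Real.exp (-s^2/2))))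

include hd hV hint in
lemma rbcont : Continuous (fun s : ℝ => hAng d V θ * (c2 d * Real.exp (-s^2/2))) :=
  continuous_const.mul (continuous_const.mul gcont)

include hd hV hint in
lemma rbpos : ∀ s : ℝ, 0 < hAng d V θ * (c2 d * Real.exp (-s^2/2)) := fun s =>
  mul_pos (hAng_pos hV hint) (mul_pos (c2_pos hd) (Real.exp_pos _))

include hd in
lemma rbint (C : ℝ) :
    IntegrableOn (fun s : ℝ => s ^ (d-1) * (C * Real.exp (-s^2/2))) (Ioi 0) := by
  have h1 : IntegrableOn (fun x : ℝ => C * (x ^ (d-1) * Real.exp (-x^2/2))) (Ioi 0) :=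
    (gauss_int_Ioi hd).const_mul C
  exact h1.congr_fun (fun x _ => by ring) measurableSet_Ioi

include hd hV hint in
lemma map_Tmap : (muA d V θ).map (Tmap d V θ) = muB d V θ := by
  have hTm : Measurable (Tmap d V θ) := measurable_Tmap hd hV
  have hρa : Continuous (fun s : ℝ => Real.exp (V (s • θ))) := rcont (hV := hV)
  have hApos := hAng_pos hV hint
  haveI : IsFiniteMeasure (muA d V θ) := ⟨by
    rw [muA, measure_withDensity_apply hρa rpos hint MeasurableSet.univ]
    exact ENNReal.ofReal_lt_top⟩
  haveI : IsFiniteMeasure ((muA d V θ).map (Tmap d V θ)) := ⟨by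
    rw [Measure.map_apply hTm MeasurableSet.univ, preimage_univ]
    exact measure_lt_top _ _⟩
  refine Measure.ext_of_Iic _ _ (fun t => ?_)
  rw [Measure.map_apply hTm measurableSet_Iic,
    muA, measure_withDensity_apply hρa rpos hint (hTm measurableSet_Iic),
    muB, measure_withDensity_apply (rbcont hd hV hint) (rbpos hd hV hint)
      (rbint hd (hAng d V θ * c2 d) |>.congr_fun (fun x _ => by ring) measurableSet_Ioi)
      measurableSet_Iic]
  have hrhs : ∫ s in Iic t ∩ Ioi 0, s ^ (d-1) * (hAng d V θ * (c2 d * Real.exp (-s^2/2)))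
      = hAng d V θ * Phi0 d t := by
    rw [show Iic t ∩ Ioi (0:ℝ) = Ioc 0 t by rw [inter_comm, Ioi_inter_Iic], Phi0_eq' hd t]
    simp_rw [show ∀ s : ℝ, s ^ (d-1) * (hAng d V θ * (c2 d * Real.exp (-s^2/2)))
        = (hAng d V θ * c2 d) * (s ^ (d-1) * Real.exp (-s^2/2)) from fun s => by ring]
    rw [integral_const_mul]
    ring
  rw [hrhs]
  rcases lt_or_ge t 0 with ht | ht
  · have hempty : (Tmap d V θ ⁻¹' Iic t) ∩ Ioi 0 = ∅ := by
      ext r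
      simp only [mem_inter_iff, mem_preimage, mem_Iic, mem_Ioi, mem_empty_iff_false, iff_false,
        not_and]
      intro hrt
      exact absurd (lt_of_le_of_lt (le_trans (Phi0Inv_nonneg _) hrt) ht) (lt_irrefl 0)
    rw [hempty, Phi0_nonpos hd ht.le]
    simp
  · set v := Phi0 d t with hv
    have hv0 : 0 ≤ v := Phi0_nonneg hd t
    have hv1 : v < 1 := Phi0_lt_one hd t
    obtain ⟨rv, hrv0, hFrv⟩ := F_surj hρa hint (v := hAng d V θ * v)
      (mul_nonneg hApos.le hv0)
      (by
        have := mul_lt_mul_of_pos_left hv1 hApos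
        rw [mul_one] at this
        exact this)
    have hphirv : phiAng d V θ rv = v := by
      rw [phiAng_eq hV hrv0, hFrv, inv_mul_cancel_left₀ hApos.ne']
    have hset : (Tmap d V θ ⁻¹' Iic t) ∩ Ioi 0 = Ioc 0 rv := by
      ext r
      simp only [mem_inter_iff, mem_preimage, mem_Iic, mem_Ioi, mem_Ioc]
      constructor
      · rintro ⟨hrt, hr0⟩
        refine ⟨hr0, ?_⟩
        have hphir : phiAng d V θ r ≤ v :=
          (Phi0Inv_le_iff hd (phiAng_nonneg hV hint hr0.le)
            (phiAng_lt_one hV hint hr0.le) ht).1 hrt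
        by_contra hc
        push_neg at hc
        have := phiAng_strictMonoOn hV hint hrv0 hr0.le hc
        rw [hphirv] at this
        exact absurd (hphir.trans_lt this) (lt_irrefl _)
      · rintro ⟨hr0, hrrv⟩
        refine ⟨?_, hr0⟩
        have hphir : phiAng d V θ r ≤ v := by
          rw [← hphirv]
          exact (phiAng_strictMonoOn hV hint).monotoneOn hr0.le hrv0 hrrv
        exact (Phi0Inv_le_iff hd (phiAng_nonneg hV hint hr0.le)
          (phiAng_lt_one hV hint hr0.le) ht).2 hphir
    rw [hset, hFrv]

lemma integral_withDensity_gen {k : ℕ} {ρ : ℝ → ℝ} (hρ : Continuous ρ) (hpos : ∀ s, 0 < ρ s)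
    (G : ℝ → ℝ) :
    ∫ x, G x ∂((volume.restrict (Ioi 0)).withDensity fun s => ENNReal.ofReal (s ^ k * ρ s))
      = ∫ s in Ioi (0:ℝ), s ^ k * (G s * ρ s) := by
  simp only [ENNReal.ofReal]
  rw [integral_withDensity_eq_integral_smul
    (show Measurable (fun s : ℝ => Real.toNNReal (s ^ k * ρ s)) from
      ((continuous_pow k).mul hρ).measurable.real_toNNReal) G]
  refine setIntegral_congr_fun measurableSet_Ioi (fun s hs => ?_)
  rw [NNReal.smul_def, Real.coe_toNNReal _ (le_of_lt (mul_pos (pow_pos hs _) (hpos s))),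
    smul_eq_mul]
  ring

include hd hV hint in
lemma inner_transport {g : EuclideanSpace ℝ (Fin d) → ℝ} (hg : Measurable g) :
    ∫ r in Ioi (0:ℝ), r ^ (d-1) * (g (Tmap d V θ r • θ) * Real.exp (V (r • θ)))
      = ∫ s in Ioi (0:ℝ),
          s ^ (d-1) * (g (s • θ) * (hAng d V θ * (c2 d * Real.exp (-s^2/2)))) := by
  have hρa : Continuous (fun s : ℝ => Real.exp (V (s • θ))) := rcont (hV := hV)
  have hG : Measurable (fun s : ℝ => g (s • θ)) :=
    hg.comp ((continuous_id.smul continuous_const).measurable)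
  calc ∫ r in Ioi (0:ℝ), r ^ (d-1) * (g (Tmap d V θ r • θ) * Real.exp (V (r • θ)))
      = ∫ x, (fun s : ℝ => g (s • θ)) (Tmap d V θ x) ∂(muA d V θ) :=
        (integral_withDensity_gen hρa rpos (fun r => g (Tmap d V θ r • θ))).symm
    _ = ∫ x, (fun s : ℝ => g (s • θ)) x ∂((muA d V θ).map (Tmap d V θ)) :=
        (integral_map (measurable_Tmap hd hV).aemeasurable
          hG.stronglyMeasurable.aestronglyMeasurable).symm
    _ = ∫ x, (fun s : ℝ => g (s • θ)) x ∂(muB d V θ) := by rw [map_Tmap hd hV hint]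
    _ = _ := integral_withDensity_gen (rbcont hd hV hint) (rbpos hd hV hint) _

end Theta

section Global

variable {d : ℕ} {V : EuclideanSpace ℝ (Fin d) → ℝ}

lemma integrable_subtype_comap_iff {α : Type*} [MeasurableSpace α] {μ : Measure α} {s : Set α}
    (hs : MeasurableSet s) (f : α → ℝ) :
    Integrable (fun x : s => f x.1) (μ.comap Subtype.val) ↔ IntegrableOn f s μ := by
  rw [IntegrableOn, ← map_comap_subtype_coe hs]
  simpa [Function.comp_def] using
    ((MeasurableEmbedding.subtype_coe hs).integrable_map_iff (g := f)).symm

set_option maxHeartbeats 1000000 in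
lemma polar_eq (hd : 2 ≤ d) (f : EuclideanSpace ℝ (Fin d) → ℝ) :
    ∫ x, f x = ∫ p : Metric.sphere (0 : EuclideanSpace ℝ (Fin d)) 1 × Ioi (0:ℝ),
      f (p.2.1 • p.1.1)
      ∂((volume : Measure (EuclideanSpace ℝ (Fin d))).toSphere.prod
          (Measure.volumeIoiPow (d - 1))) := by
  haveI := nontriv hd
  have h0 : ∫ x, f x ∂(volume : Measure (EuclideanSpace ℝ (Fin d)))
      = ∫ x : ({(0 : EuclideanSpace ℝ (Fin d))}ᶜ : Set (EuclideanSpace ℝ (Fin d))),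
          f x.1 ∂(volume.comap Subtype.val) := by
    rw [integral_subtype_comap (measurableSet_singleton (0 : EuclideanSpace ℝ (Fin d))).compl f,
      restrict_compl_singleton]
  have h1 := (Measure.measurePreserving_homeomorphUnitSphereProd
      (volume : Measure (EuclideanSpace ℝ (Fin d)))).integral_comp
      (Homeomorph.measurableEmbedding _) (fun p => f (p.2.1 • p.1.1))
  rw [dim_eq] at h1
  rw [h0, ← h1]
  refine integral_congr_ae (ae_of_all _ fun x => ?_)
  simp only [homeomorphUnitSphereProd_apply_fst_coe, homeomorphUnitSphereProd_apply_snd_coe]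
  rw [smul_inv_smul₀ (norm_ne_zero_iff.2 x.2)]

lemma integral_IoiPow (n : ℕ) (f : ℝ → ℝ) :
    ∫ r : Ioi (0:ℝ), f r.1 ∂(Measure.volumeIoiPow n) = ∫ r in Ioi (0:ℝ), (r:ℝ) ^ n * f r := by
  simp only [Measure.volumeIoiPow, ENNReal.ofReal]
  rw [integral_withDensity_eq_integral_smul
      ((measurable_subtype_coe.pow_const n).real_toNNReal) (fun r : Ioi (0:ℝ) => f r.1),
    integral_subtype_comap measurableSet_Ioi (fun a : ℝ => Real.toNNReal (a ^ n) • f a)]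
  refine setIntegral_congr_fun measurableSet_Ioi fun x hx => ?_
  rw [NNReal.smul_def, Real.coe_toNNReal _ (pow_nonneg (le_of_lt hx) _), smul_eq_mul]

lemma integrable_IoiPow_iff (n : ℕ) (f : ℝ → ℝ) :
    Integrable (fun r : Ioi (0:ℝ) => f r.1) (Measure.volumeIoiPow n)
      ↔ IntegrableOn (fun r : ℝ => r ^ n * f r) (Ioi 0) := by
  rw [Measure.volumeIoiPow]
  simp only [ENNReal.ofReal]
  rw [integrable_withDensity_iff_integrable_smul
      ((measurable_subtype_coe.pow_const n).real_toNNReal)]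
  have h2 := integrable_subtype_comap_iff (μ := (volume : Measure ℝ)) (s := Ioi (0:ℝ))
    measurableSet_Ioi (fun a : ℝ => Real.toNNReal (a ^ n) • f a)
  rw [h2]
  constructor
  · intro h
    refine h.congr_fun (fun x hx => ?_) measurableSet_Ioi
    beta_reduce
    rw [NNReal.smul_def, Real.coe_toNNReal _ (pow_nonneg (le_of_lt hx) _), smul_eq_mul]
  · intro h
    refine h.congr_fun (fun x hx => ?_) measurableSet_Ioi
    beta_reduce
    rw [NNReal.smul_def, Real.coe_toNNReal _ (pow_nonneg (le_of_lt hx) _), smul_eq_mul]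

set_option maxHeartbeats 1000000 in
lemma integrable_polar_iff (hd : 2 ≤ d) (f : EuclideanSpace ℝ (Fin d) → ℝ) :
    Integrable (fun p : Metric.sphere (0 : EuclideanSpace ℝ (Fin d)) 1 × Ioi (0:ℝ) =>
        f (p.2.1 • p.1.1))
      ((volume : Measure (EuclideanSpace ℝ (Fin d))).toSphere.prod
          (Measure.volumeIoiPow (d - 1)))
      ↔ Integrable f (volume : Measure (EuclideanSpace ℝ (Fin d))) := by
  haveI := nontriv hd
  have h1 := (Measure.measurePreserving_homeomorphUnitSphereProd
      (volume : Measure (EuclideanSpace ℝ (Fin d)))).integrable_comp_emb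
      (Homeomorph.measurableEmbedding _)
      (g := fun p : Metric.sphere (0 : EuclideanSpace ℝ (Fin d)) 1 × Ioi (0:ℝ) =>
        f (p.2.1 • p.1.1))
  rw [dim_eq] at h1
  rw [← h1]
  have h2 : ((fun p : Metric.sphere (0 : EuclideanSpace ℝ (Fin d)) 1 × Ioi (0:ℝ) =>
      f (p.2.1 • p.1.1)) ∘ (homeomorphUnitSphereProd (EuclideanSpace ℝ (Fin d))))
      = fun x : ({(0 : EuclideanSpace ℝ (Fin d))}ᶜ : Set (EuclideanSpace ℝ (Fin d))) =>
          f x.1 := by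
    funext x
    simp only [Function.comp_apply, homeomorphUnitSphereProd_apply_fst_coe,
      homeomorphUnitSphereProd_apply_snd_coe]
    rw [smul_inv_smul₀ (norm_ne_zero_iff.2 x.2)]
  rw [h2, integrable_subtype_comap_iff (measurableSet_singleton _).compl f, IntegrableOn,
    restrict_compl_singleton]

lemma hAng_nonneg (θ : EuclideanSpace ℝ (Fin d)) : 0 ≤ hAng d V θ :=
  setIntegral_nonneg measurableSet_Ioi fun s hs =>
    le_of_lt (mul_pos (pow_pos hs _) (Real.exp_pos _))

lemma hAng_measurable (hV : Continuous V) : Measurable (fun θ : EuclideanSpace ℝ (Fin d) => hAng d V θ) := by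
  have hc : Continuous (fun q : EuclideanSpace ℝ (Fin d) × ℝ =>
      q.2 ^ (d-1) * Real.exp (V (q.2 • q.1))) := by
    exact ((continuous_snd.pow _).mul
      (Real.continuous_exp.comp (hV.comp (continuous_snd.smul continuous_fst))))
  exact (hc.stronglyMeasurable.integral_prod_right'
    (ν := (volume : Measure ℝ).restrict (Ioi 0))).measurable

lemma Fpair_measurable (hV : Continuous V) :
    Measurable (fun q : EuclideanSpace ℝ (Fin d) × ℝ =>
      ∫ s in Ioc (0:ℝ) q.2, s ^ (d-1) * Real.exp (V (s • q.1))) := by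
  have hc : Continuous (fun z : (EuclideanSpace ℝ (Fin d) × ℝ) × ℝ =>
      z.2 ^ (d-1) * Real.exp (V (z.2 • z.1.1))) :=
    ((continuous_snd.pow _).mul
      (Real.continuous_exp.comp (hV.comp (continuous_snd.smul (continuous_fst.fst)))))
  have hs : MeasurableSet {z : (EuclideanSpace ℝ (Fin d) × ℝ) × ℝ | z.2 ∈ Ioc 0 z.1.2} := by
    have : {z : (EuclideanSpace ℝ (Fin d) × ℝ) × ℝ | z.2 ∈ Ioc 0 z.1.2}
        = {z | (0:ℝ) < z.2} ∩ {z | z.2 ≤ z.1.2} := by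
      ext z; simp [mem_Ioc, and_comm]
    rw [this]
    exact (measurableSet_lt measurable_const measurable_snd).inter
      (measurableSet_le measurable_snd (measurable_fst.snd))
  have hsm := ((hc.stronglyMeasurable.indicator hs).integral_prod_right'
    (ν := (volume : Measure ℝ))).measurable
  have h2 : (fun q : EuclideanSpace ℝ (Fin d) × ℝ =>
      ∫ s, ({z : (EuclideanSpace ℝ (Fin d) × ℝ) × ℝ | z.2 ∈ Ioc 0 z.1.2}.indicator
        (fun z => z.2 ^ (d-1) * Real.exp (V (z.2 • z.1.1)))) (q, s))
      = fun q : EuclideanSpace ℝ (Fin d) × ℝ =>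
          ∫ s in Ioc (0:ℝ) q.2, s ^ (d-1) * Real.exp (V (s • q.1)) := by
    funext q
    have h4 : (fun s : ℝ => ({z : (EuclideanSpace ℝ (Fin d) × ℝ) × ℝ | z.2 ∈ Ioc 0 z.1.2}.indicator
        (fun z => z.2 ^ (d-1) * Real.exp (V (z.2 • z.1.1)))) (q, s))
        = (Ioc (0:ℝ) q.2).indicator (fun s => s ^ (d-1) * Real.exp (V (s • q.1))) := by
      funext s
      by_cases hmem : s ∈ Ioc 0 q.2
      · simp only [Set.indicator_of_mem hmem,
          Set.indicator_of_mem (show (q,s) ∈ {z : (EuclideanSpace ℝ (Fin d) × ℝ) × ℝ | z.2 ∈ Ioc 0 z.1.2} from hmem)]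
      · simp only [Set.indicator_of_notMem hmem,
          Set.indicator_of_notMem (show (q,s) ∉ {z : (EuclideanSpace ℝ (Fin d) × ℝ) × ℝ | z.2 ∈ Ioc 0 z.1.2} from hmem)]
    rw [h4, integral_indicator measurableSet_Ioc]
  rw [← h2]
  exact hsm

set_option maxHeartbeats 1000000 in
lemma yMap_measurable (hd : 2 ≤ d) (hV : Continuous V) : Measurable (yMap d V) := by
  have hn : Measurable (fun x : EuclideanSpace ℝ (Fin d) => ‖x‖⁻¹ • x) :=
    (measurable_norm.inv).smul measurable_id
  have hB : Measurable (fun x : EuclideanSpace ℝ (Fin d) =>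
      ∫ s in Ioc (0:ℝ) ‖x‖, s ^ (d-1) * Real.exp (V (s • (‖x‖⁻¹ • x)))) := by
    have h5 := (Fpair_measurable hV).comp
      (f := fun x : EuclideanSpace ℝ (Fin d) => (‖x‖⁻¹ • x, ‖x‖)) (hn.prodMk measurable_norm)
    simpa [Function.comp_def] using h5
  have hA : Measurable (fun x : EuclideanSpace ℝ (Fin d) => (hAng d V (‖x‖⁻¹ • x))⁻¹) := by
    have h5 := ((hAng_measurable hV).comp hn).inv
    exact h5
  have h1 : Measurable (fun x : EuclideanSpace ℝ (Fin d) =>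
      phiAng d V (‖x‖⁻¹ • x) ‖x‖) := by
    have heq : (fun x : EuclideanSpace ℝ (Fin d) => phiAng d V (‖x‖⁻¹ • x) ‖x‖)
        = fun x : EuclideanSpace ℝ (Fin d) => (hAng d V (‖x‖⁻¹ • x))⁻¹ *
            ∫ s in Ioc (0:ℝ) ‖x‖, s ^ (d-1) * Real.exp (V (s • (‖x‖⁻¹ • x))) := by
      funext x
      unfold phiAng
      rw [← F_eq_interval (norm_nonneg x)]
    rw [heq]
    exact hA.mul hB
  have h6 := ((measurable_Phi0Inv hd).comp h1).smul hn
  unfold yMap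
  exact h6

lemma yMap_smul {θ : EuclideanSpace ℝ (Fin d)} (hθ : ‖θ‖ = 1) {r : ℝ} (hr : 0 < r) :
    yMap d V (r • θ) = Tmap d V θ r • θ := by
  have hnorm : ‖r • θ‖ = r := by
    rw [norm_smul, hθ, mul_one, Real.norm_eq_abs, abs_of_pos hr]
  rw [yMap, hnorm, inv_smul_smul₀ (ne_of_gt hr)]
  rfl

lemma expV_integrable (hV1 : ∫ x : EuclideanSpace ℝ (Fin d), Real.exp (V x) = 1) :
    Integrable (fun x : EuclideanSpace ℝ (Fin d) => Real.exp (V x)) := by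
  by_contra hc
  rw [integral_undef hc] at hV1
  norm_num at hV1

end Global

end T17

set_option maxHeartbeats 2000000 in
theorem stmt17 (d : ℕ) (hd : 2 ≤ d)
    (V : EuclideanSpace ℝ (Fin d) → ℝ) (hV : Continuous V)
    (hV1 : ∫ x, Real.exp (V x) = 1)
    (μ : Measure (EuclideanSpace ℝ (Fin d)))
    (hμ : μ = volume.withDensity (fun x => ENNReal.ofReal (Real.exp (V x))))
    (hh : ∀ θ : EuclideanSpace ℝ (Fin d), ‖θ‖ = 1 →
      IntegrableOn (fun s : ℝ => s ^ (d - 1) * Real.exp (V (s • θ))) (Ioi 0)) :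
    ∀ g : EuclideanSpace ℝ (Fin d) → ℝ, Measurable g → (∃ M : ℝ, ∀ x, |g x| ≤ M) →
      ∫ x, g (yMap d V x) ∂μ =
        ∫ x, g x * ((d : ℝ) * omegad d * hAng d V (‖x‖⁻¹ • x)) *
          ((2 * Real.pi) ^ (-(d:ℝ)/2) * Real.exp (-‖x‖^2/2)) := by
  intro g hg hbd
  obtain ⟨M, hM⟩ := hbd
  subst hμ
  set f₁ : EuclideanSpace ℝ (Fin d) → ℝ := fun x => g (yMap d V x) * Real.exp (V x) with hf₁
  set f₂ : EuclideanSpace ℝ (Fin d) → ℝ := fun x =>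
    g x * ((d : ℝ) * omegad d * hAng d V (‖x‖⁻¹ • x)) *
      ((2 * Real.pi) ^ (-(d:ℝ)/2) * Real.exp (-‖x‖^2/2)) with hf₂
  have hWint : Integrable (fun x : EuclideanSpace ℝ (Fin d) => Real.exp (V x)) :=
    T17.expV_integrable hV1
  have hym := T17.yMap_measurable hd hV
  have hf₁m : Measurable f₁ := (hg.comp hym).mul (Real.continuous_exp.comp hV).measurable
  have hnms : Measurable (fun x : EuclideanSpace ℝ (Fin d) => ‖x‖⁻¹ • x) :=
    (measurable_norm.inv).smul measurable_id
  have hAn : Measurable (fun x : EuclideanSpace ℝ (Fin d) => hAng d V (‖x‖⁻¹ • x)) := by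
    have h5 := (T17.hAng_measurable hV).comp hnms
    simpa [Function.comp_def] using h5
  have hf₂m : Measurable f₂ := by
    refine (hg.mul ?_).mul (Continuous.measurable (by continuity))
    exact hAn.const_mul _
  have hsmulc : Continuous (fun p : Metric.sphere (0 : EuclideanSpace ℝ (Fin d)) 1 × Ioi (0:ℝ)
      => p.2.1 • p.1.1) :=
    (continuous_subtype_val.comp continuous_snd).smul (continuous_subtype_val.comp continuous_fst)
  have hD : Integrable (fun p : Metric.sphere (0 : EuclideanSpace ℝ (Fin d)) 1 × Ioi (0:ℝ) =>
      Real.exp (V (p.2.1 • p.1.1)))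
      ((volume : Measure (EuclideanSpace ℝ (Fin d))).toSphere.prod
        (Measure.volumeIoiPow (d - 1))) :=
    (T17.integrable_polar_iff hd _).2 hWint
  have hL : ∫ x, g (yMap d V x)
        ∂(volume.withDensity fun x => ENNReal.ofReal (Real.exp (V x)))
      = ∫ x, f₁ x := by
    simp only [ENNReal.ofReal]
    have hme : Measurable fun x : EuclideanSpace ℝ (Fin d) => Real.toNNReal (Real.exp (V x)) :=
      (Real.continuous_exp.comp hV).measurable.real_toNNReal
    rw [integral_withDensity_eq_integral_smul hme (fun x => g (yMap d V x))]
    refine integral_congr_ae (Eventually.of_forall fun x => ?_)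
    show (Real.exp (V x)).toNNReal • g (yMap d V x) = f₁ x
    rw [NNReal.smul_def, Real.coe_toNNReal _ (Real.exp_nonneg _), smul_eq_mul]
    simp only [hf₁]
    ring
  have hF1int : Integrable (fun p : Metric.sphere (0 : EuclideanSpace ℝ (Fin d)) 1 × Ioi (0:ℝ) =>
      f₁ (p.2.1 • p.1.1))
      ((volume : Measure (EuclideanSpace ℝ (Fin d))).toSphere.prod
        (Measure.volumeIoiPow (d - 1))) := by
    refine (hD.const_mul M).mono' ?_ (ae_of_all _ fun p => ?_)
    · exact (hf₁m.comp hsmulc.measurable).aestronglyMeasurable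
    · simp only [hf₁]
      rw [Real.norm_eq_abs, abs_mul, abs_of_pos (Real.exp_pos _)]
      exact mul_le_mul_of_nonneg_right (hM _) (Real.exp_nonneg _)
  have hhang_int : Integrable (fun θ : Metric.sphere (0 : EuclideanSpace ℝ (Fin d)) 1 =>
      hAng d V θ.1) (volume : Measure (EuclideanSpace ℝ (Fin d))).toSphere := by
    have h7 := hD.integral_prod_left
    refine h7.congr (ae_of_all _ fun θ => ?_)
    show (∫ r : Ioi (0:ℝ), Real.exp (V (r.1 • θ.1)) ∂Measure.volumeIoiPow (d-1))
      = hAng d V θ.1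
    rw [T17.integral_IoiPow (d-1) (fun r => Real.exp (V (r • θ.1)))]
    rfl
  have hgaussint : Integrable (fun r : Ioi (0:ℝ) => Real.exp (-(r.1:ℝ)^2/2))
      (Measure.volumeIoiPow (d-1)) := by
    exact (T17.integrable_IoiPow_iff (d-1) (fun r => Real.exp (-r^2/2))).2
      (T17.gauss_int_Ioi hd)
  have hF2int : Integrable (fun p : Metric.sphere (0 : EuclideanSpace ℝ (Fin d)) 1 × Ioi (0:ℝ) =>
      f₂ (p.2.1 • p.1.1))
      ((volume : Measure (EuclideanSpace ℝ (Fin d))).toSphere.prod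
        (Measure.volumeIoiPow (d - 1))) := by
    have hdom := (hhang_int.mul_prod hgaussint).const_mul
      (M * ((d:ℝ) * omegad d) * (2*Real.pi) ^ (-(d:ℝ)/2))
    refine hdom.mono' ?_ (ae_of_all _ fun p => ?_)
    · exact (hf₂m.comp hsmulc.measurable).aestronglyMeasurable
    · obtain ⟨θ, r⟩ := p
      have hr : (0:ℝ) < r.1 := r.2
      have hθ1 : ‖(θ : EuclideanSpace ℝ (Fin d))‖ = 1 := mem_sphere_zero_iff_norm.mp θ.2
      have hx1 : ‖(r.1:ℝ) • (θ : EuclideanSpace ℝ (Fin d))‖ = r.1 := by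
        rw [norm_smul, hθ1, mul_one, Real.norm_eq_abs, abs_of_pos hr]
      have hx2 : ‖(r.1:ℝ) • (θ : EuclideanSpace ℝ (Fin d))‖⁻¹ •
          ((r.1:ℝ) • (θ : EuclideanSpace ℝ (Fin d))) = (θ : EuclideanSpace ℝ (Fin d)) := by
        rw [hx1, inv_smul_smul₀ (ne_of_gt hr)]
      simp only [hf₂]
      rw [hx2, hx1]
      have hC1 : (0:ℝ) ≤ (d:ℝ) * omegad d * hAng d V θ.1 :=
        mul_nonneg (mul_nonneg (Nat.cast_nonneg d) ENNReal.toReal_nonneg)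
          (T17.hAng_nonneg θ.1)
      have hC2 : (0:ℝ) ≤ (2*Real.pi) ^ (-(d:ℝ)/2) * Real.exp (-(r.1:ℝ)^2/2) := by positivity
      rw [Real.norm_eq_abs, abs_mul, abs_mul, abs_of_nonneg hC1, abs_of_nonneg hC2]
      calc |g ((r.1:ℝ) • (θ : EuclideanSpace ℝ (Fin d)))| *
            ((d:ℝ) * omegad d * hAng d V θ.1) *
            ((2*Real.pi) ^ (-(d:ℝ)/2) * Real.exp (-(r.1:ℝ)^2/2))
          ≤ M * ((d:ℝ) * omegad d * hAng d V θ.1) *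
            ((2*Real.pi) ^ (-(d:ℝ)/2) * Real.exp (-(r.1:ℝ)^2/2)) :=
            mul_le_mul_of_nonneg_right (mul_le_mul_of_nonneg_right (hM _) hC1) hC2
        _ = M * ((d:ℝ) * omegad d) * (2*Real.pi) ^ (-(d:ℝ)/2) *
            (hAng d V θ.1 * Real.exp (-(r.1:ℝ)^2/2)) := by ring
  calc ∫ x, g (yMap d V x)
        ∂(volume.withDensity fun x => ENNReal.ofReal (Real.exp (V x)))
      = ∫ x, f₁ x := hL
    _ = ∫ p : Metric.sphere (0 : EuclideanSpace ℝ (Fin d)) 1 × Ioi (0:ℝ),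
          f₁ (p.2.1 • p.1.1)
          ∂((volume : Measure (EuclideanSpace ℝ (Fin d))).toSphere.prod
            (Measure.volumeIoiPow (d - 1))) := T17.polar_eq hd f₁
    _ = ∫ θ : Metric.sphere (0 : EuclideanSpace ℝ (Fin d)) 1,
          ∫ r : Ioi (0:ℝ), f₁ (r.1 • θ.1) ∂(Measure.volumeIoiPow (d-1))
          ∂(volume : Measure (EuclideanSpace ℝ (Fin d))).toSphere :=
        integral_prod _ hF1int
    _ = ∫ θ : Metric.sphere (0 : EuclideanSpace ℝ (Fin d)) 1,
          ∫ r : Ioi (0:ℝ), f₂ (r.1 • θ.1) ∂(Measure.volumeIoiPow (d-1))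
          ∂(volume : Measure (EuclideanSpace ℝ (Fin d))).toSphere := by
        refine integral_congr_ae (ae_of_all _ fun θ => ?_)
        show (∫ r : Ioi (0:ℝ), f₁ (r.1 • θ.1) ∂Measure.volumeIoiPow (d-1))
          = ∫ r : Ioi (0:ℝ), f₂ (r.1 • θ.1) ∂Measure.volumeIoiPow (d-1)
        have hθ1 : ‖(θ : EuclideanSpace ℝ (Fin d))‖ = 1 := mem_sphere_zero_iff_norm.mp θ.2
        have hintθ := hh θ.1 hθ1
        rw [T17.integral_IoiPow (d-1) (fun r => f₁ (r • θ.1)),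
          T17.integral_IoiPow (d-1) (fun r => f₂ (r • θ.1))]
        calc ∫ r in Ioi (0:ℝ), r ^ (d-1) * f₁ (r • θ.1)
            = ∫ r in Ioi (0:ℝ), r ^ (d-1) *
                (g (T17.Tmap d V θ.1 r • θ.1) * Real.exp (V (r • θ.1))) := by
              refine setIntegral_congr_fun measurableSet_Ioi fun r hr => ?_
              simp only [hf₁]
              rw [T17.yMap_smul hθ1 hr]
          _ = ∫ s in Ioi (0:ℝ), s ^ (d-1) *
                (g (s • θ.1) * (hAng d V θ.1 * (T17.c2 d * Real.exp (-s^2/2)))) :=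
              T17.inner_transport hd hV hintθ hg
          _ = ∫ s in Ioi (0:ℝ), s ^ (d-1) * f₂ (s • θ.1) := by
              refine setIntegral_congr_fun measurableSet_Ioi fun s hs => ?_
              have hx1 : ‖s • (θ : EuclideanSpace ℝ (Fin d))‖ = s := by
                rw [norm_smul, hθ1, mul_one, Real.norm_eq_abs, abs_of_pos hs]
              have hx2 : ‖s • (θ : EuclideanSpace ℝ (Fin d))‖⁻¹ •
                  (s • (θ : EuclideanSpace ℝ (Fin d))) = (θ : EuclideanSpace ℝ (Fin d)) := by
                rw [hx1, inv_smul_smul₀ (ne_of_gt hs)]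
              simp only [hf₂]
              rw [hx2, hx1, T17.c2]
              ring
    _ = ∫ p : Metric.sphere (0 : EuclideanSpace ℝ (Fin d)) 1 × Ioi (0:ℝ),
          f₂ (p.2.1 • p.1.1)
          ∂((volume : Measure (EuclideanSpace ℝ (Fin d))).toSphere.prod
            (Measure.volumeIoiPow (d - 1))) := (integral_prod _ hF2int).symm
    _ = ∫ x, f₂ x := (T17.polar_eq hd f₂).symm
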